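/- Fix k > 0 and ℓ > 2k. Define T_s(r) = max(min(r, s), −s), T̄_s(r) = ∫₀^r T_s(τ)dτ, J(r) = T_{ℓ−k}(r − T_k(r)) and J̄(r) = ∫₀^r J(τ)dτ. Then for all r, s ∈ ℝ with |s| ≤ k: (i) T̄_{ℓ+k}(r − s) − J̄(r) ≥ 0; (ii) T_{ℓ+k}(r − s)·(T_k(r) − s) ≥ 0; (iii) |T̄_{ℓ+k}(r − T_k(r)) − J̄(r)| ≤ 2k·|r|·χ_{{|r| ≥ ℓ}}. -/

import Mathlib

/-!
`T_k` is the projection of `ℝ` onto `[-k, k]`, so on the interval between `r` and `T_k r` the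
function `T_k` is constant. Hence `J` vanishes between `0` and `T_k r` and is a translate of
`T_{ℓ-k}` between `T_k r` and `r`, which gives `J̄(r) = T̄_{ℓ-k}(r - T_k r)`, with
`|r - T_k r| = max(|r| - k, 0)`. Everything then reduces to three properties of the even
function `T̄_s`: it is increasing in `|r|`, increasing in the level `s`, and
`0 ≤ T̄_t(a) - T̄_s(a) ≤ (t - s)|a|`, with equality `T̄_t(a) = T̄_s(a) = a²/2` when `|a| ≤ s`. In (ii) both factors have the sign
of `r - s`, as `T_k s = s`.
-/

open MeasureTheory

/-- Truncation at level `s`: `T_s(r) = max(min(r,s), −s)`. -/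
def trunc (s r : ℝ) : ℝ := max (min r s) (-s)

/-- Primitive of the truncation: `T̄_s(r) = ∫₀^r T_s(τ) dτ`. -/
noncomputable def truncBar (s r : ℝ) : ℝ := ∫ τ in (0:ℝ)..r, trunc s τ

/-- `J(r) = T_{ℓ−k}(r − T_k(r))`. -/
def Jfun (k ℓ r : ℝ) : ℝ := trunc (ℓ - k) (r - trunc k r)

/-- `J̄(r) = ∫₀^r J(τ) dτ`. -/
noncomputable def JfunBar (k ℓ r : ℝ) : ℝ := ∫ τ in (0:ℝ)..r, Jfun k ℓ τ

open intervalIntegral Set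

lemma integral_zero_neg_of_odd {f : ℝ → ℝ} (hodd : ∀ x, f (-x) = -f x) (r : ℝ) :
    ∫ τ in (0 : ℝ)..(-r), f τ = ∫ τ in (0 : ℝ)..r, f τ := by
  have h := integral_comp_neg (a := r) (b := 0) f
  simp only [neg_zero, hodd, intervalIntegral.integral_neg] at h
  rw [← h, integral_symm, neg_neg]

lemma integral_zero_eq_of_eqOn_zero_of_eqOn_comp_sub {f g : ℝ → ℝ} {c r : ℝ}
    (hf₀ : IntervalIntegrable f volume 0 c) (hf₁ : IntervalIntegrable f volume c r)
    (h₀ : EqOn f 0 (uIcc 0 c)) (h₁ : EqOn f (fun τ => g (τ - c)) (uIcc c r)) :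
    ∫ τ in (0 : ℝ)..r, f τ = ∫ τ in (0 : ℝ)..(r - c), g τ := by
  rw [← integral_add_adjacent_intervals hf₀ hf₁, integral_congr h₀, integral_congr h₁,
    integral_comp_sub_right, sub_self]
  simp

section

variable {s t : ℝ}

lemma continuous_trunc (s : ℝ) : Continuous (trunc s) :=
  (continuous_id.min continuous_const).max continuous_const

lemma monotone_trunc (s : ℝ) : Monotone (trunc s) :=
  fun _ _ h => max_le_max_right _ (min_le_min_right _ h)

lemma trunc_of_abs_le {x : ℝ} (h : |x| ≤ s) : trunc s x = x := by
  rw [trunc, min_eq_left (abs_le.1 h).2, max_eq_left (abs_le.1 h).1]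

lemma trunc_zero (hs : 0 ≤ s) : trunc s 0 = 0 :=
  trunc_of_abs_le (by simpa using hs)

lemma abs_trunc_le (hs : 0 ≤ s) (x : ℝ) : |trunc s x| ≤ s :=
  abs_le.2 ⟨le_max_right _ _, max_le (min_le_right _ _) (by linarith)⟩

lemma trunc_neg (hs : 0 ≤ s) (x : ℝ) : trunc s (-x) = -trunc s x := by
  simp only [trunc, min_def, max_def]
  split_ifs <;> linarith

lemma trunc_nonneg (hs : 0 ≤ s) {x : ℝ} (hx : 0 ≤ x) : 0 ≤ trunc s x :=
  trunc_zero hs ▸ monotone_trunc s hx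

lemma trunc_nonpos (hs : 0 ≤ s) {x : ℝ} (hx : x ≤ 0) : trunc s x ≤ 0 :=
  trunc_zero hs ▸ monotone_trunc s hx

lemma trunc_eq_of_mem_uIcc {r τ : ℝ} (hτ : τ ∈ uIcc (trunc s r) r) : trunc s τ = trunc s r := by
  simp only [trunc, mem_uIcc, min_def, max_def] at hτ ⊢
  split_ifs at hτ ⊢ <;> rcases hτ with h | h <;> linarith [h.1, h.2]

lemma abs_sub_trunc (hs : 0 ≤ s) (r : ℝ) : |r - trunc s r| = max (|r| - s) 0 := by
  simp only [trunc, min_def, max_def, abs_eq_max_neg]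
  split_ifs <;> linarith

lemma trunc_sub_trunc_le (hst : s ≤ t) (x : ℝ) : trunc t x - trunc s x ≤ t - s := by
  simp only [trunc, min_def, max_def]
  split_ifs <;> linarith

lemma trunc_le_trunc_of_le (hs : 0 ≤ s) (hst : s ≤ t) {x : ℝ} (hx : 0 ≤ x) :
    trunc s x ≤ trunc t x := by
  simp only [trunc, min_def, max_def]
  split_ifs <;> linarith

lemma trunc_sub_mul_trunc_sub_nonneg {k : ℝ} (ht : 0 ≤ t) (hs : |s| ≤ k) (r : ℝ) :
    0 ≤ trunc t (r - s) * (trunc k r - s) := by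
  rcases le_total s r with h | h
  · refine mul_nonneg (trunc_nonneg ht (sub_nonneg.2 h)) (sub_nonneg.2 ?_)
    simpa only [trunc_of_abs_le hs] using monotone_trunc k h
  · refine mul_nonneg_of_nonpos_of_nonpos (trunc_nonpos ht (sub_nonpos.2 h)) (sub_nonpos.2 ?_)
    simpa only [trunc_of_abs_le hs] using monotone_trunc k h

lemma intervalIntegrable_trunc (s a b : ℝ) : IntervalIntegrable (trunc s) volume a b :=
  (continuous_trunc s).intervalIntegrable a b

lemma truncBar_neg (hs : 0 ≤ s) (r : ℝ) : truncBar s (-r) = truncBar s r :=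
  integral_zero_neg_of_odd (trunc_neg hs) r

lemma truncBar_abs (hs : 0 ≤ s) (r : ℝ) : truncBar s |r| = truncBar s r := by
  rcases abs_choice r with h | h <;> rw [h]
  exact truncBar_neg hs r

lemma truncBar_of_abs_le {a : ℝ} (h : |a| ≤ s) : truncBar s a = a ^ 2 / 2 := by
  have hsub : uIcc 0 a ⊆ Icc (-s) s :=
    uIcc_subset_Icc (by simpa using (abs_nonneg a).trans h) (abs_le.1 h)
  rw [truncBar, integral_congr (g := fun τ => τ) fun τ hτ => trunc_of_abs_le (abs_le.2 (hsub hτ)),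
    integral_id]
  ring

lemma truncBar_le_truncBar (hs : 0 ≤ s) {a b : ℝ} (ha : 0 ≤ a) (hab : a ≤ b) :
    truncBar s a ≤ truncBar s b := by
  have h : 0 ≤ ∫ τ in a..b, trunc s τ :=
    integral_nonneg hab fun τ hτ => trunc_nonneg hs (ha.trans hτ.1)
  rw [truncBar, truncBar, ← integral_add_adjacent_intervals (intervalIntegrable_trunc s 0 a)
    (intervalIntegrable_trunc s a b)]
  linarith

lemma truncBar_le_truncBar_of_abs_le (hs : 0 ≤ s) {a b : ℝ} (hab : |a| ≤ |b|) :
    truncBar s a ≤ truncBar s b := by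
  rw [← truncBar_abs hs a, ← truncBar_abs hs b]
  exact truncBar_le_truncBar hs (abs_nonneg a) hab

lemma truncBar_le_truncBar_of_le (hs : 0 ≤ s) (hst : s ≤ t) (a : ℝ) :
    truncBar s a ≤ truncBar t a := by
  rw [← truncBar_abs hs a, ← truncBar_abs (hs.trans hst) a, truncBar, truncBar]
  exact integral_mono_on (abs_nonneg a) (intervalIntegrable_trunc s 0 _)
    (intervalIntegrable_trunc t 0 _) fun _ hτ => trunc_le_trunc_of_le hs hst hτ.1

lemma truncBar_sub_truncBar_le (hst : s ≤ t) {a : ℝ} (ha : 0 ≤ a) :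
    truncBar t a - truncBar s a ≤ (t - s) * a := by
  rw [truncBar, truncBar,
    ← integral_sub (intervalIntegrable_trunc t 0 a) (intervalIntegrable_trunc s 0 a)]
  calc ∫ τ in (0 : ℝ)..a, (trunc t τ - trunc s τ)
      ≤ ∫ _ in (0 : ℝ)..a, (t - s) :=
        integral_mono_on ha ((intervalIntegrable_trunc t 0 a).sub (intervalIntegrable_trunc s 0 a))
          intervalIntegrable_const fun τ _ => trunc_sub_trunc_le hst τ
    _ = (t - s) * a := by rw [intervalIntegral.integral_const, smul_eq_mul, sub_zero, mul_comm]

end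

section

variable {k ℓ : ℝ}

lemma continuous_Jfun (k ℓ : ℝ) : Continuous (Jfun k ℓ) :=
  (continuous_trunc _).comp (continuous_id.sub (continuous_trunc k))

lemma Jfun_eq_zero_of_abs_le (hkℓ : k ≤ ℓ) {τ : ℝ} (h : |τ| ≤ k) : Jfun k ℓ τ = 0 := by
  rw [Jfun, trunc_of_abs_le h, sub_self, trunc_zero (sub_nonneg.2 hkℓ)]

lemma JfunBar_eq_truncBar (hk : 0 ≤ k) (hkℓ : k ≤ ℓ) (r : ℝ) :
    JfunBar k ℓ r = truncBar (ℓ - k) (r - trunc k r) := by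
  have hsub : uIcc 0 (trunc k r) ⊆ Icc (-k) k :=
    uIcc_subset_Icc (by simpa using hk) (abs_le.1 (abs_trunc_le hk r))
  refine integral_zero_eq_of_eqOn_zero_of_eqOn_comp_sub
    ((continuous_Jfun k ℓ).intervalIntegrable _ _) ((continuous_Jfun k ℓ).intervalIntegrable _ _)
    (fun τ hτ => Jfun_eq_zero_of_abs_le hkℓ (abs_le.2 (hsub hτ))) fun τ hτ => ?_
  rw [Jfun, trunc_eq_of_mem_uIcc hτ]

lemma JfunBar_le_truncBar (hk : 0 ≤ k) (hkℓ : k ≤ ℓ) {s : ℝ} (hs : |s| ≤ k) (r : ℝ) :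
    JfunBar k ℓ r ≤ truncBar (ℓ + k) (r - s) := by
  have hshrink : |r - trunc k r| ≤ |r - s| := by
    rw [abs_sub_trunc hk]
    exact max_le (by linarith [abs_sub_abs_le_abs_sub r s]) (abs_nonneg _)
  rw [JfunBar_eq_truncBar hk hkℓ]
  exact (truncBar_le_truncBar_of_le (sub_nonneg.2 hkℓ) (by linarith) _).trans
    (truncBar_le_truncBar_of_abs_le (by linarith) hshrink)

lemma truncBar_sub_JfunBar_le (hk : 0 ≤ k) (hkℓ : k ≤ ℓ) (r : ℝ) :
    truncBar (ℓ + k) (r - trunc k r) - JfunBar k ℓ r ≤ if ℓ ≤ |r| then 2 * k * |r| else 0 := by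
  have hshrink := abs_sub_trunc hk r
  rw [JfunBar_eq_truncBar hk hkℓ]
  split_ifs with h
  · calc truncBar (ℓ + k) (r - trunc k r) - truncBar (ℓ - k) (r - trunc k r)
        = truncBar (ℓ + k) |r - trunc k r| - truncBar (ℓ - k) |r - trunc k r| := by
          rw [truncBar_abs (by linarith), truncBar_abs (sub_nonneg.2 hkℓ)]
      _ ≤ (ℓ + k - (ℓ - k)) * |r - trunc k r| :=
          truncBar_sub_truncBar_le (by linarith) (abs_nonneg _)
      _ ≤ 2 * k * |r| := by
          have : max (|r| - k) 0 ≤ |r| := max_le (by linarith) (abs_nonneg r)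
          rw [hshrink]
          nlinarith
  · have hsmall : |r - trunc k r| ≤ ℓ - k := by
      rw [hshrink]
      exact max_le (by linarith) (sub_nonneg.2 hkℓ)
    rw [truncBar_of_abs_le hsmall, truncBar_of_abs_le (hsmall.trans (by linarith)), sub_self]

end

/-- for `|s| ≤ k`, `ℓ > 2k > 0`:
(i) `T̄_{ℓ+k}(r − s) − J̄(r) ≥ 0`; (ii) `T_{ℓ+k}(r − s)(T_k(r) − s) ≥ 0`;
(iii) `|T̄_{ℓ+k}(r − T_k(r)) − J̄(r)| ≤ 2k|r|·χ_{|r| ≥ ℓ}`. -/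
theorem stmt13 (k ℓ : ℝ) (hk : 0 < k) (hℓ : 2 * k < ℓ) :
    ∀ r s : ℝ, |s| ≤ k →
      0 ≤ truncBar (ℓ + k) (r - s) - JfunBar k ℓ r ∧
      0 ≤ trunc (ℓ + k) (r - s) * (trunc k r - s) ∧
      |truncBar (ℓ + k) (r - trunc k r) - JfunBar k ℓ r| ≤
        (if ℓ ≤ |r| then 2 * k * |r| else 0) := by
  intro r s hs
  have hkℓ : k ≤ ℓ := by linarith
  refine ⟨sub_nonneg.2 (JfunBar_le_truncBar hk.le hkℓ hs r),
    trunc_sub_mul_trunc_sub_nonneg (by linarith) hs r, ?_⟩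
  rw [abs_of_nonneg (sub_nonneg.2 (JfunBar_le_truncBar hk.le hkℓ (abs_trunc_le hk.le r) r))]
  exact truncBar_sub_JfunBar_le hk.le hkℓ r
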